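/- arXiv:1304.5458 — 4 statements merged into one kernel-verified Lean document; each statement's English description precedes it below -/
import Mathlib

section
/- For all α, β ∈ ℂ, all k, s ∈ ℤ, and every basis vector v_p of T(α,β) (p ∈ β + ℤ), the third differentiator annihilates T(α,β): Σ_{i=0}^{3} (-1)^i binom(3,i) e_{k-i} e_{s+i} v_p = 0, where e_k v_s = (s + αk) v_{s+k}. -/
/-- The operator `e_k` on the module of tensor fields `T(α,β)` on the circle,
which has basis `v_p`, `p ∈ β + ℤ` (here `Finsupp.single n 1` represents `v_{β+n}`),
with action `e_k v_p = (p + α k) v_{p+k}`. -/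
noncomputable def Ek (α β : ℂ) (k : ℤ) : (ℤ →₀ ℂ) →ₗ[ℂ] (ℤ →₀ ℂ) :=
  Finsupp.lsum ℂ fun n => (β + (n : ℂ) + α * (k : ℂ)) • Finsupp.lsingle (n + k)

lemma Ek_single (α β : ℂ) (k m : ℤ) :
    Ek α β k (Finsupp.single m 1) = (β + (m : ℂ) + α * k) • Finsupp.single (m + k) 1 := by
  rw [Ek, Finsupp.lsum_single]; simp [Finsupp.smul_single]

/-- The third differentiator `Ω^{(3)}_{k,s}` annihilates every module of tensor
fields `T(α,β)`. -/
theorem third_differentiator_annihilates (α β : ℂ) (k s n : ℤ) :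
    ∑ i ∈ Finset.range 4,
      ((-1 : ℂ) ^ i * (Nat.choose 3 i : ℂ)) •
        Ek α β (k - i) (Ek α β (s + i) (Finsupp.single n 1)) = 0 := by
  simp only [Finset.sum_range_succ, Finset.sum_range_zero, zero_add, Ek_single, map_smul, smul_smul]
  have h : ∀ i : ℤ, n + (s + i) + (k - i) = n + s + k := by intro i; ring
  simp only [h]
  rw [← add_smul, ← add_smul, ← add_smul]
  convert zero_smul ℂ _
  norm_num [Nat.choose]
  ring
end

section
/- Suppose L is a Lie algebra that is also an A-module over a commutative unital algebra A, L acts on A by derivations, and the adjoint representation satisfies the compatibility [y, fx] = y(f)x + f[y,x] for f ∈ A, x, y ∈ L. Let M be an L-module and for x ∈ L, u ∈ M define ψ(x,u) ∈ Hom(A,M) by ψ(x,u)(f) = (fx)·u. Then under the coinduced actions on Hom(A,M), one has y·ψ(x,u) = ψ([y,x], u) + ψ(x, y·u) and g·ψ(x,u) = ψ(gx, u) for all x, y ∈ L, u ∈ M, g ∈ A. -/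
variable {K : Type*} [Field K] {L : Type*} [LieRing L] [LieAlgebra K L]
  {A : Type*} [CommRing A] [Algebra K A] [Module A L]
  {M : Type*} [AddCommGroup M] [Module K M] [LieRingModule L M] [LieModule K L M]

attribute [local instance 100] LieRing.ofAssociativeRing

/-- The coinduced action of `L` on `Hom(A, M)`: `(x·φ)(f) = x·(φ f) - φ(x·f)`. -/
def coind (D : L →ₗ⁅K⁆ Module.End K A) (x : L) (φ : A → M) : A → M :=
  fun f => ⁅x, φ f⁆ - φ (D x f)

/-- The action of `A` on `Hom(A, M)`: `(g·φ)(f) = φ(g f)`. -/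
def actA (g : A) (φ : A → M) : A → M := fun f => φ (g * f)

/-- The generators of the `A`-cover: `ψ(x,u)(f) = (f x)·u`. -/
def psi (x : L) (u : M) : A → M := fun f => ⁅f • x, u⁆

theorem cover_action_formulas_general (D : L →ₗ⁅K⁆ Module.End K A)
    (hcompat : ∀ (y : L) (f : A) (x : L), ⁅y, f • x⁆ = D y f • x + f • ⁅y, x⁆)
    (x y : L) (u : M) (g : A) :
    (∀ f : A, coind D y (psi x u) f = psi ⁅y, x⁆ u f + psi x ⁅y, u⁆ f) ∧
      (∀ f : A, actA g (psi x u) f = psi (g • x) u f) := by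
  refine ⟨fun f => ?_, fun f => ?_⟩
  · -- Leibniz, then compatibility: the coinduced action subtracts exactly `(y·f) x · u`.
    simp only [coind, psi]
    rw [leibniz_lie y (f • x) u, hcompat y f x, add_lie]
    abel
  · simp only [actA, psi, mul_comm g f, mul_smul]

/-- The action of `L` and `A` on the generators `ψ(x,u)` of the `A`-cover:
`y·ψ(x,u) = ψ([y,x],u) + ψ(x, y·u)` and `g·ψ(x,u) = ψ(g x, u)`. -/
theorem cover_action_formulas (D : L →ₗ⁅K⁆ Module.End K A)
    (hder : ∀ (x : L) (a b : A), D x (a * b) = a * D x b + D x a * b)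
    (hcompat : ∀ (y : L) (f : A) (x : L), ⁅y, f • x⁆ = D y f • x + f • ⁅y, x⁆)
    (x y : L) (u : M) (g : A) :
    (∀ f : A, coind D y (psi x u) f = psi ⁅y, x⁆ u f + psi x ⁅y, u⁆ f) ∧
      (∀ f : A, actA g (psi x u) f = psi (g • x) u f) :=
  cover_action_formulas_general D hcompat x y u g
end

section
/- The subspace N = { Σ_i x_i ⊗ u_i ∈ L ⊗ M : Σ_i (f x_i)·u_i = 0 for all f ∈ A } is an L-submodule of the tensor product module L ⊗ M (with L acting on the first factor by the adjoint action and on the second by the module action), and the A-cover of M is isomorphic as an L-module to (L ⊗ M)/N. -/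
open TensorProduct

attribute [local instance 100] LieRing.ofAssociativeRing

variable {K : Type*} [Field K] {L : Type*} [LieRing L] [LieAlgebra K L]
  {A : Type*} [CommRing A] [Algebra K A] [Module A L] [SMulCommClass A K L]
  {M : Type*} [AddCommGroup M] [Module K M] [LieRingModule L M] [LieModule K L M]

/-- The `A`-cover of `M`: the span of the `ψ(x,u)` inside `Hom(A,M)`. -/
def cover (K : Type*) [Field K] (L : Type*) [LieRing L] (A : Type*) [CommRing A]
    [Module A L] (M : Type*) [AddCommGroup M] [Module K M] [LieRingModule L M] :
    Submodule K (A → M) :=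
  Submodule.span K {φ : A → M | ∃ (x : L) (u : M), φ = psi x u}

/-- The contraction `Σ xᵢ ⊗ uᵢ ↦ Σ (f xᵢ)·uᵢ`. -/
noncomputable def ctr (f : A) : L ⊗[K] M →ₗ[K] M :=
  TensorProduct.lift (LinearMap.mk₂ K (fun x u => ⁅f • x, u⁆)
    (fun x₁ x₂ u => show ⁅f • (x₁ + x₂), u⁆ = ⁅f • x₁, u⁆ + ⁅f • x₂, u⁆ by
      rw [smul_add, add_lie])
    (fun c x u => show ⁅f • (c • x), u⁆ = c • ⁅f • x, u⁆ by rw [smul_comm, smul_lie])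
    (fun x u₁ u₂ => show ⁅f • x, u₁ + u₂⁆ = ⁅f • x, u₁⁆ + ⁅f • x, u₂⁆ by rw [lie_add])
    (fun c x u => show ⁅f • x, c • u⁆ = c • ⁅f • x, u⁆ by rw [lie_smul]))

/-- The subspace `N = {Σ xᵢ ⊗ uᵢ : Σ (f xᵢ)·uᵢ = 0 for all f}`. -/
noncomputable def Ncov : Submodule K (L ⊗[K] M) :=
  ⨅ f : A, LinearMap.ker (ctr (L := L) (M := M) f)

/-!
Proof idea: the generators `ψ(x,u)` extend to a linear map `L ⊗ M → Hom(A, M)`, whose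
`f`-component is the contraction `ctr f`. Its kernel is `N` and its image is the `A`-cover, since
pure tensors span `L ⊗ M`. By the Leibniz rule in `M` and the compatibility
`[y, f x] = (y·f) x + f [y, x]`, it intertwines the action of `L` on `L ⊗ M` with the coinduced
action on `Hom(A, M)`. Hence `N` is an `L`-submodule, and the first isomorphism theorem identifies
`(L ⊗ M)/N` with the cover as `L`-modules.
-/

noncomputable def psiLin : L ⊗[K] M →ₗ[K] (A → M) :=
  LinearMap.pi ctr

omit [Algebra K A] in
lemma psiLin_tmul (x : L) (u : M) : psiLin (K := K) (x ⊗ₜ[K] u) = psi (A := A) x u := rfl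

omit [Algebra K A] in
lemma Ncov_eq_ker_psiLin :
    Ncov (K := K) (L := L) (A := A) (M := M) = LinearMap.ker (psiLin (A := A)) := by
  ext z
  simp [Ncov, psiLin, Submodule.mem_iInf, LinearMap.mem_ker, funext_iff]

omit [Algebra K A] in
lemma range_psiLin :
    LinearMap.range (psiLin (K := K) (L := L) (A := A) (M := M)) = cover K L A M := by
  apply le_antisymm
  · rw [LinearMap.range_eq_map, ← TensorProduct.span_tmul_eq_top K L M, Submodule.map_span,
      Submodule.span_le]
    rintro φ ⟨z, ⟨x, u, rfl⟩, rfl⟩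
    exact Submodule.subset_span ⟨x, u, psiLin_tmul x u⟩
  · rw [cover, Submodule.span_le]
    rintro φ ⟨x, u, rfl⟩
    exact ⟨x ⊗ₜ u, psiLin_tmul x u⟩

omit [Module A L] [SMulCommClass A K L] [Module K M] [LieModule K L M] in
lemma coind_zero (D : L →ₗ⁅K⁆ Module.End K A) (y : L) : coind D y (0 : A → M) = 0 := by
  funext f
  simp [coind]

omit [Module A L] [SMulCommClass A K L] [Module K M] [LieModule K L M] in
lemma coind_add (D : L →ₗ⁅K⁆ Module.End K A) (y : L) (φ φ' : A → M) :
    coind D y (φ + φ') = coind D y φ + coind D y φ' := by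
  funext f
  simp only [coind, Pi.add_apply, lie_add]
  abel

lemma psiLin_lie (D : L →ₗ⁅K⁆ Module.End K A)
    (hcompat : ∀ (y : L) (f : A) (x : L), ⁅y, f • x⁆ = D y f • x + f • ⁅y, x⁆)
    (y : L) (z : L ⊗[K] M) : psiLin ⁅y, z⁆ = coind D y (psiLin z) := by
  induction z using TensorProduct.induction_on with
  | zero => rw [lie_zero, map_zero, coind_zero]
  | tmul x u =>
    rw [LieModule.lie_tmul_right, map_add, psiLin_tmul, psiLin_tmul, psiLin_tmul]
    funext f
    simp only [Pi.add_apply, psi, coind]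
    rw [leibniz_lie y (f • x) u, hcompat, add_lie]
    abel
  | add z₁ z₂ h₁ h₂ => rw [lie_add, map_add, map_add, h₁, h₂, coind_add]

noncomputable def quotNcovEquivCover :
    ((L ⊗[K] M) ⧸ Ncov (K := K) (L := L) (A := A) (M := M)) ≃ₗ[K] cover K L A M :=
  (Submodule.quotEquivOfEq _ _ (Ncov_eq_ker_psiLin (K := K) (L := L) (A := A) (M := M))).trans
    ((LinearMap.quotKerEquivRange (psiLin (K := K) (L := L) (A := A) (M := M))).trans
      (LinearEquiv.ofEq _ _ range_psiLin))

omit [Algebra K A] in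
lemma quotNcovEquivCover_mk (z : L ⊗[K] M) :
    (quotNcovEquivCover (A := A) (Submodule.Quotient.mk z) : A → M) = psiLin z := by
  simp only [quotNcovEquivCover, LinearEquiv.trans_apply, Submodule.quotEquivOfEq_mk,
    LinearMap.quotKerEquivRange_apply_mk, LinearEquiv.coe_ofEq_apply]

theorem cover_iso_tensor_quotient_general (D : L →ₗ⁅K⁆ Module.End K A)
    (hcompat : ∀ (y : L) (f : A) (x : L), ⁅y, f • x⁆ = D y f • x + f • ⁅y, x⁆) :
    (∀ (y : L) (z : L ⊗[K] M), z ∈ Ncov (A := A) → ⁅y, z⁆ ∈ Ncov (A := A)) ∧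
      ∃ Φ : ((L ⊗[K] M) ⧸ Ncov (A := A)) ≃ₗ[K] cover K L A M,
        ∀ (y : L) (z : L ⊗[K] M),
          (Φ (Submodule.Quotient.mk ⁅y, z⁆) : A → M)
            = coind D y (Φ (Submodule.Quotient.mk z) : A → M) := by
  refine ⟨fun y z hz => ?_, quotNcovEquivCover, fun y z => ?_⟩
  · rw [Ncov_eq_ker_psiLin, LinearMap.mem_ker] at hz ⊢
    rw [psiLin_lie D hcompat, hz, coind_zero]
  · rw [quotNcovEquivCover_mk, quotNcovEquivCover_mk, psiLin_lie D hcompat]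

/-- `N` is an `L`-submodule of `L ⊗ M` (with `L` acting by the adjoint action on the first
factor and the module action on the second), and the `A`-cover of `M` is isomorphic as an
`L`-module to `(L ⊗ M)/N`. -/
theorem cover_iso_tensor_quotient (D : L →ₗ⁅K⁆ Module.End K A)
    (hder : ∀ (x : L) (a b : A), D x (a * b) = a * D x b + D x a * b)
    (hcompat : ∀ (y : L) (f : A) (x : L), ⁅y, f • x⁆ = D y f • x + f • ⁅y, x⁆) :
    (∀ (y : L) (z : L ⊗[K] M), z ∈ Ncov (A := A) → ⁅y, z⁆ ∈ Ncov (A := A)) ∧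
      ∃ Φ : ((L ⊗[K] M) ⧸ Ncov (A := A)) ≃ₗ[K] cover K L A M,
        ∀ (y : L) (z : L ⊗[K] M),
          (Φ (Submodule.Quotient.mk ⁅y, z⁆) : A → M)
            = coind D y (Φ (Submodule.Quotient.mk z) : A → M) :=
  cover_iso_tensor_quotient_general D hcompat
end

section
/- Let U be a finite-dimensional gl_n(ℂ)-module and β ∈ ℂ^n. Define an action of W_n on T(U,β) = ⊕_{s ∈ β+ℤ^n} ℂ t^s ⊗ U by (t^m d_a)(t^s ⊗ u) = s_a t^{s+m} ⊗ u + Σ_{p=1}^n m_p t^{s+m} ⊗ E_{pa} u. Then this defines a W_n-module structure: the commutator of the actions of t^m d_a and t^r d_b equals the action of [t^m d_a, t^r d_b] = r_a t^{m+r} d_b - m_b t^{m+r} d_a. -/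
/-! Both sides send `t^s ⊗ u` into the single component `t^{s+m+r}`. There the scalar terms
`s_a`, `s_b` cancel up to the shifts `r_a`, `m_b`, and what remains is `ρ` applied to the
matrix identity `[Σ_p m_p E_{pa}, Σ_q r_q E_{qb}] = r_a Σ_p m_p E_{pb} - m_b Σ_q r_q E_{qa}`,
which holds because `E_{pa} E_{qb} = δ_{aq} E_{pb}`. -/

attribute [local instance 100] LieRing.ofAssociativeRing

/-- The matrix `Σ_p m_p E_{pa}` (the matrix whose column `a` is `m` and all other
entries are `0`). -/
def EMat (n : ℕ) (m : Fin n → ℤ) (a : Fin n) : Matrix (Fin n) (Fin n) ℂ :=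
  fun p q => if q = a then (m p : ℂ) else 0

lemma EMat_mul (n : ℕ) (m r : Fin n → ℤ) (a b : Fin n) :
    EMat n m a * EMat n r b = (r a : ℂ) • EMat n m b := by
  ext p q
  simp only [EMat, Matrix.mul_apply, Matrix.smul_apply, smul_eq_mul, ite_mul, mul_ite,
    mul_zero, zero_mul]
  by_cases h : q = b <;> simp [h, mul_comm]

lemma EMat_lie (n : ℕ) (m r : Fin n → ℤ) (a b : Fin n) :
    ⁅EMat n m a, EMat n r b⁆ = (r a : ℂ) • EMat n m b - (m b : ℂ) • EMat n r a := by
  rw [Ring.lie_def, EMat_mul, EMat_mul]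

lemma EMat_add (n : ℕ) (m r : Fin n → ℤ) (a : Fin n) :
    EMat n (m + r) a = EMat n m a + EMat n r a := by
  ext p q
  simp only [EMat, Matrix.add_apply, Pi.add_apply, Int.cast_add]
  split <;> simp

/-- The action of the vector field `t^m d_a` on the module of tensor fields
`T(U,β) = ⊕_{s ∈ β+ℤⁿ} ℂ t^s ⊗ U` (here `Finsupp.single sI u` represents
`t^{β+sI} ⊗ u`): `(t^m d_a)(t^s ⊗ u) = s_a t^{s+m} ⊗ u + Σ_p m_p t^{s+m} ⊗ E_{pa} u`. -/
noncomputable def tact {n : ℕ} {U : Type*} [AddCommGroup U] [Module ℂ U]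
    (β : Fin n → ℂ) (ρ : Matrix (Fin n) (Fin n) ℂ →ₗ⁅ℂ⁆ Module.End ℂ U)
    (m : Fin n → ℤ) (a : Fin n) :
    ((Fin n → ℤ) →₀ U) →ₗ[ℂ] ((Fin n → ℤ) →₀ U) :=
  Finsupp.lsum ℂ fun sI =>
    Finsupp.lsingle (sI + m) ∘ₗ ((β a + (sI a : ℂ)) • LinearMap.id + ρ (EMat n m a))

section

variable {n : ℕ} {U : Type*} [AddCommGroup U] [Module ℂ U]
  (ρ : Matrix (Fin n) (Fin n) ℂ →ₗ⁅ℂ⁆ Module.End ℂ U)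

lemma lieHom_EMat_commutator_apply (m r : Fin n → ℤ) (a b : Fin n) (u : U) :
    ρ (EMat n m a) (ρ (EMat n r b) u) - ρ (EMat n r b) (ρ (EMat n m a) u)
      = (r a : ℂ) • ρ (EMat n m b) u - (m b : ℂ) • ρ (EMat n r a) u := by
  simpa [EMat_lie, Module.End.lie_apply] using
    (LinearMap.congr_fun (ρ.map_lie (EMat n m a) (EMat n r b)) u).symm

lemma tact_single (β : Fin n → ℂ) (m : Fin n → ℤ) (a : Fin n) (s : Fin n → ℤ) (u : U) :
    tact β ρ m a (Finsupp.single s u)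
      = Finsupp.single (s + m) ((β a + (s a : ℂ)) • u + ρ (EMat n m a) u) := by
  simp [tact]

end

theorem tensor_fields_module_structure_general {n : ℕ} {U : Type*} [AddCommGroup U] [Module ℂ U]
    (β : Fin n → ℂ)
    (ρ : Matrix (Fin n) (Fin n) ℂ →ₗ⁅ℂ⁆ Module.End ℂ U)
    (m r : Fin n → ℤ) (a b : Fin n) :
    tact β ρ m a ∘ₗ tact β ρ r b - tact β ρ r b ∘ₗ tact β ρ m a
      = (r a : ℂ) • tact β ρ (m + r) b - (m b : ℂ) • tact β ρ (m + r) a := by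
  refine Finsupp.lhom_ext fun s u => ?_
  simp only [LinearMap.sub_apply, LinearMap.comp_apply, LinearMap.smul_apply, tact_single,
    Finsupp.smul_single, ← Finsupp.single_sub, add_right_comm s r m, add_assoc s m r]
  congr 1
  simp only [EMat_add, Pi.add_apply, Int.cast_add, map_add, map_smul, LinearMap.add_apply]
  linear_combination (norm := module) lieHom_EMat_commutator_apply ρ m r a b u

/-- The tensor field action defines a `W_n`-module structure on `T(U,β)`:
the commutator of the actions of `t^m d_a` and `t^r d_b` is the action of
`[t^m d_a, t^r d_b] = r_a t^{m+r} d_b - m_b t^{m+r} d_a`. -/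
theorem tensor_fields_module_structure {n : ℕ} {U : Type*} [AddCommGroup U] [Module ℂ U]
    [FiniteDimensional ℂ U] (β : Fin n → ℂ)
    (ρ : Matrix (Fin n) (Fin n) ℂ →ₗ⁅ℂ⁆ Module.End ℂ U)
    (m r : Fin n → ℤ) (a b : Fin n) :
    tact β ρ m a ∘ₗ tact β ρ r b - tact β ρ r b ∘ₗ tact β ρ m a
      = (r a : ℂ) • tact β ρ (m + r) b - (m b : ℂ) • tact β ρ (m + r) a :=
  tensor_fields_module_structure_general β ρ m r a b
end
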